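/- Let X be a curve of m₁ ≥ 2 points and Y a nonempty curve in ℝ^d with dFr(X,Y) < λ(X). Then every paired walk along X and Y of cost less than λ(X) is one-to-many, and in particular there exists a one-to-many paired walk along X and Y of cost exactly dFr(X,Y). -/

import Mathlib

noncomputable section

abbrev Pt (d : ℕ) : Type := EuclideanSpace ℝ (Fin d)

/-- Cost contribution of a single pair of blocks: the maximum distance between a point
of `A` and a point of `B` (0 if one of them is empty). -/
def pairCost {d : ℕ} (A B : List (Pt d)) : ℝ :=
  (A.map fun p => (B.map fun q => dist p q).foldr max 0).foldr max 0

/-- `ω` is a paired walk along `P` and `Q`: the first components partition `P` into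
consecutive nonempty blocks, the second components partition `Q`, and in each pair at
least one block is a single point. -/
def IsPairedWalk {d : ℕ} (ω : List (List (Pt d) × List (Pt d))) (P Q : List (Pt d)) : Prop :=
  (ω.map Prod.fst).flatten = P ∧ (ω.map Prod.snd).flatten = Q ∧
    ∀ pr ∈ ω, pr.1 ≠ [] ∧ pr.2 ≠ [] ∧ (pr.1.length = 1 ∨ pr.2.length = 1)

/-- The cost of a paired walk: the maximum over its pairs of the maximum distance between
matched points. -/
def walkCost {d : ℕ} (ω : List (List (Pt d) × List (Pt d))) : ℝ :=
  (ω.map fun pr => pairCost pr.1 pr.2).foldr max 0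

/-- The discrete Fréchet distance: the minimum cost over all paired walks along `P` and `Q`. -/
def dFr {d : ℕ} (P Q : List (Pt d)) : ℝ :=
  sInf {c : ℝ | ∃ ω, IsPairedWalk ω P Q ∧ walkCost ω = c}

/-- A paired walk is one-to-many if each block of the first curve is a single point. -/
def OneToMany {d : ℕ} (ω : List (List (Pt d) × List (Pt d))) : Prop :=
  ∀ pr ∈ ω, pr.1.length = 1

/-- `lam X` is half the length of the shortest edge of the curve `X`. -/
def lam {d : ℕ} (X : List (Pt d)) : ℝ :=
  (1/2) * sInf {s : ℝ | ∃ (i : ℕ) (h : i + 1 < X.length),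
    s = dist (X.get ⟨i, Nat.lt_of_succ_lt h⟩) (X.get ⟨i + 1, h⟩)}

lemma le_foldr_max {l : List ℝ} {a : ℝ} (h : a ∈ l) : a ≤ l.foldr max 0 := by
  induction l with
  | nil => cases h
  | cons x xs ih =>
    rcases List.mem_cons.1 h with rfl | h
    · exact le_max_left _ _
    · exact le_trans (ih h) (le_max_right _ _)

lemma foldr_max_mem (l : List ℝ) : l.foldr max 0 = 0 ∨ l.foldr max 0 ∈ l := by
  induction l with
  | nil => left; rfl
  | cons x xs ih =>
    simp only [List.foldr_cons]
    rcases max_choice x (xs.foldr max 0) with h | h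
    · right; rw [h]; exact List.mem_cons_self
    · rw [h]
      rcases ih with h' | h'
      · left; exact h'
      · right; exact List.mem_cons_of_mem _ h'

lemma dist_le_pairCost {d : ℕ} {A B : List (Pt d)} {p q : Pt d}
    (hp : p ∈ A) (hq : q ∈ B) : dist p q ≤ pairCost A B := by
  have h1 : dist p q ≤ (B.map fun q' => dist p q').foldr max 0 :=
    le_foldr_max (List.mem_map.2 ⟨q, hq, rfl⟩)
  exact le_trans h1 (le_foldr_max (List.mem_map.2 ⟨p, hp, rfl⟩))

lemma pairCost_le_walkCost {d : ℕ} {ω : List (List (Pt d) × List (Pt d))}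
    {pr : List (Pt d) × List (Pt d)} (hpr : pr ∈ ω) : pairCost pr.1 pr.2 ≤ walkCost ω :=
  le_foldr_max (List.mem_map.2 ⟨pr, hpr, rfl⟩)

/-- If `dFr X Y < lam X`, then every paired walk along `X` and `Y` of cost less than
`lam X` is one-to-many, and in particular there is a one-to-many paired walk along `X`
and `Y` of cost exactly `dFr X Y`. -/
theorem small_distance_walk_one_to_many {d : ℕ} (X Y : List (Pt d))
    (hX : 2 ≤ X.length) (hY : Y ≠ []) (h : dFr X Y < lam X) :
    (∀ ω, IsPairedWalk ω X Y → walkCost ω < lam X → OneToMany ω) ∧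
    ∃ ω, IsPairedWalk ω X Y ∧ OneToMany ω ∧ walkCost ω = dFr X Y := by
  classical
  have hXne : X ≠ [] := by intro hc; rw [hc] at hX; simp at hX
  have part1 : ∀ ω, IsPairedWalk ω X Y → walkCost ω < lam X → OneToMany ω := by
    intro ω hω hcost pr hpr
    obtain ⟨hfst, hsnd, hpairs⟩ := hω
    obtain ⟨h1ne, h2ne, h1or2⟩ := hpairs pr hpr
    by_contra hlen
    have h2 : pr.2.length = 1 := h1or2.resolve_left hlen
    obtain ⟨q, hq⟩ := List.length_eq_one_iff.1 h2
    -- pr.1 = a :: b :: rest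
    obtain ⟨a, b, rest, hab⟩ : ∃ a b rest, pr.1 = a :: b :: rest := by
      match h1 : pr.1 with
      | [] => exact absurd h1 h1ne
      | [a] => exact absurd (by simp [h1]) hlen
      | a :: b :: rest => exact ⟨a, b, rest, rfl⟩
    obtain ⟨s, t, hst⟩ := List.append_of_mem hpr
    have hX' : X = (s.map Prod.fst).flatten ++
        (a :: b :: (rest ++ (t.map Prod.fst).flatten)) := by
      rw [← hfst, hst]
      simp [hab]
    set L := (s.map Prod.fst).flatten with hL
    set M := rest ++ (t.map Prod.fst).flatten with hM
    have hlt : L.length + 1 < X.length := by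
      simp [hX']
    have ha : X.get ⟨L.length, Nat.lt_of_succ_lt hlt⟩ = a := by
      simp only [List.get_eq_getElem, hX']
      rw [List.getElem_append_right le_rfl]
      simp
    have hb : X.get ⟨L.length + 1, hlt⟩ = b := by
      simp only [List.get_eq_getElem, hX']
      rw [List.getElem_append_right (Nat.le_succ _)]
      simp
    -- edge set
    have hmemE : dist a b ∈ {s : ℝ | ∃ (i : ℕ) (h : i + 1 < X.length),
        s = dist (X.get ⟨i, Nat.lt_of_succ_lt h⟩) (X.get ⟨i + 1, h⟩)} :=
      ⟨L.length, hlt, by rw [ha, hb]⟩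
    have hbdd : BddBelow {s : ℝ | ∃ (i : ℕ) (h : i + 1 < X.length),
        s = dist (X.get ⟨i, Nat.lt_of_succ_lt h⟩) (X.get ⟨i + 1, h⟩)} := by
      refine ⟨0, ?_⟩
      rintro s ⟨i, hi, rfl⟩
      exact dist_nonneg
    have hinf : sInf {s : ℝ | ∃ (i : ℕ) (h : i + 1 < X.length),
        s = dist (X.get ⟨i, Nat.lt_of_succ_lt h⟩) (X.get ⟨i + 1, h⟩)} ≤ dist a b :=
      csInf_le hbdd hmemE
    have haq : dist a q ≤ walkCost ω :=
      le_trans (dist_le_pairCost (by rw [hab]; exact List.mem_cons_self)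
        (by rw [hq]; exact List.mem_cons_self)) (pairCost_le_walkCost hpr)
    have hbq : dist b q ≤ walkCost ω :=
      le_trans (dist_le_pairCost (by rw [hab]; exact List.mem_cons_of_mem _ (List.mem_cons_self))
        (by rw [hq]; exact List.mem_cons_self)) (pairCost_le_walkCost hpr)
    have htri : dist a b ≤ dist a q + dist q b := dist_triangle a q b
    rw [dist_comm q b] at htri
    have : lam X = (1/2) * sInf {s : ℝ | ∃ (i : ℕ) (h : i + 1 < X.length),
        s = dist (X.get ⟨i, Nat.lt_of_succ_lt h⟩) (X.get ⟨i + 1, h⟩)} := rfl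
    linarith
  refine ⟨part1, ?_⟩
  -- Nonemptiness of the set of costs
  set S := {c : ℝ | ∃ ω, IsPairedWalk ω X Y ∧ walkCost ω = c} with hS
  have hSne : S.Nonempty := by
    obtain ⟨y, ys, rfl⟩ : ∃ y ys, Y = y :: ys := by
      cases Y with
      | nil => exact absurd rfl hY
      | cons y ys => exact ⟨y, ys, rfl⟩
    cases ys with
    | nil =>
      refine ⟨walkCost [(X, [y])], [(X, [y])], ⟨?_, ?_, ?_⟩, rfl⟩
      · simp
      · simp
      · rintro pr hpr
        simp only [List.mem_singleton] at hpr
        subst hpr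
        exact ⟨hXne, by simp, Or.inr rfl⟩
    | cons y' ys' =>
      refine ⟨_, [(X.dropLast, [y]), ([X.getLast hXne], y' :: ys')], ⟨?_, ?_, ?_⟩, rfl⟩
      · simp [List.dropLast_append_getLast hXne]
      · simp
      · rintro pr hpr
        simp only [List.mem_cons, List.mem_singleton, List.not_mem_nil, or_false] at hpr
        rcases hpr with rfl | rfl
        · refine ⟨?_, by simp, Or.inr rfl⟩
          intro hc
          have := congrArg List.length hc
          simp [List.length_dropLast] at this
          omega
        · exact ⟨by simp, by simp, Or.inl rfl⟩
  -- Finiteness of the set of costs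
  have hSfin : S.Finite := by
    have hsub : S ⊆ ↑(insert (0 : ℝ)
        ((X.toFinset ×ˢ Y.toFinset).image fun pq : Pt d × Pt d => dist pq.1 pq.2)) := by
      rintro c ⟨ω, ⟨hfst, hsnd, _⟩, rfl⟩
      simp only [Finset.coe_insert, Set.mem_insert_iff, Finset.coe_image, Set.mem_image,
        Finset.mem_coe, Finset.mem_product, List.mem_toFinset]
      rcases foldr_max_mem (ω.map fun pr => pairCost pr.1 pr.2) with h0 | hmem
      · exact Or.inl h0
      obtain ⟨pr, hpr, hpc⟩ := List.mem_map.1 hmem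
      rcases foldr_max_mem (pr.1.map fun p => (pr.2.map fun q => dist p q).foldr max 0)
          with h0 | hmem1
      · left; exact hpc.symm.trans h0
      obtain ⟨p, hp, hpv⟩ := List.mem_map.1 hmem1
      rcases foldr_max_mem (pr.2.map fun q => dist p q) with h0 | hmem2
      · left; exact hpc.symm.trans (hpv.symm.trans h0)
      obtain ⟨q, hq, hqv⟩ := List.mem_map.1 hmem2
      right
      refine ⟨(p, q), ⟨?_, ?_⟩, ?_⟩
      · rw [← hfst]
        exact List.mem_flatten.2 ⟨pr.1, List.mem_map.2 ⟨pr, hpr, rfl⟩, hp⟩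
      · rw [← hsnd]
        exact List.mem_flatten.2 ⟨pr.2, List.mem_map.2 ⟨pr, hpr, rfl⟩, hq⟩
      · exact hqv.trans (hpv.trans hpc)
    exact Set.Finite.subset (Finset.finite_toSet _) hsub
  have hmem : dFr X Y ∈ S := hSne.csInf_mem hSfin
  obtain ⟨ω₀, hω₀, hcost₀⟩ := hmem
  exact ⟨ω₀, hω₀, part1 ω₀ hω₀ (hcost₀ ▸ h), hcost₀⟩
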